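/- arXiv:1802.10064 — 7 statements merged into one kernel-verified Lean document; each statement's English description precedes it below -/
import Mathlib

section
/- Let n ≥ 1 and let R be a commutative ring. Every matrix M ∈ M_{2n}(R) can be written as M = ι(h₁,h₂) + ξ·L·ξ^{-1}, where h₁, h₂ ∈ M_n(R) and L ∈ M_{2n}(R) is lower triangular. (This is the decomposition gl_{2n} = h + ξ b⁻ ξ^{-1}, where h is the Levi subalgebra of block-diagonal matrices of the (n,n)-parabolic and b⁻ is the lower-triangular Borel subalgebra.) -/
open Matrix

/-- The `n × n` antidiagonal permutation matrix `w_n`, with `(i,j)` entry `δ_{i, n+1-j}`. -/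
def wMat (n : ℕ) (R : Type*) [CommRing R] : Matrix (Fin n) (Fin n) R :=
  fun i j => if (i : ℕ) + (j : ℕ) + 1 = n then 1 else 0

/-- The block diagonal matrix `ι(A, D) = [[A, 0], [0, D]]`. -/
def iotaBlk {n : ℕ} {R : Type*} [CommRing R] (A D : Matrix (Fin n) (Fin n) R) :
    Matrix (Fin n ⊕ Fin n) (Fin n ⊕ Fin n) R :=
  Matrix.fromBlocks A 0 0 D

/-- The matrix `ξ = [[1_n, w_n], [0_n, w_n]]`. -/
def xiMat (n : ℕ) (R : Type*) [CommRing R] : Matrix (Fin n ⊕ Fin n) (Fin n ⊕ Fin n) R :=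
  Matrix.fromBlocks 1 (wMat n R) 0 (wMat n R)

/-- The matrix `ξ⁻¹ = [[1_n, -1_n], [0_n, w_n]]`. -/
def xiInvMat (n : ℕ) (R : Type*) [CommRing R] : Matrix (Fin n ⊕ Fin n) (Fin n ⊕ Fin n) R :=
  Matrix.fromBlocks 1 (-1) 0 (wMat n R)

/-
Write `L = [[a, 0], [c, d]]` with `a`, `d` lower triangular. Since `w_n² = 1`,
`ξ L ξ⁻¹ = [[a + w c, U - a - w c], [w c, U - w c]]` with `U = w d w`, and conjugation by `w_n`
reverses rows and columns, so `U` ranges over all upper triangular matrices. The block-diagonal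
part is free, so only the off-diagonal blocks `B`, `C` of `M` must be matched: take `c = w C`, and
split `B + C = U - a` into its strictly lower part `-a` and the rest `U`.
-/
section Triangular

variable {m : Type*} [LinearOrder m] {R : Type*}

def strictLowerPart [Zero R] (X : Matrix m m R) : Matrix m m R :=
  Matrix.of fun i j => if j < i then X i j else 0

lemma strictLowerPart_isLowerTriangular [Zero R] (X : Matrix m m R) :
    (strictLowerPart X).IsLowerTriangular := fun _ _ hij => if_neg (lt_asymm hij)

lemma sub_strictLowerPart_isUpperTriangular [AddGroup R] (X : Matrix m m R) :
    (X - strictLowerPart X).IsUpperTriangular := fun i j hij => by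
  simp [strictLowerPart, show j < i from hij]

end Triangular

lemma Matrix.IsUpperTriangular.submatrix_rev {n : ℕ} {R : Type*} [Zero R]
    {X : Matrix (Fin n) (Fin n) R} (hX : X.IsUpperTriangular) :
    (X.submatrix Fin.rev Fin.rev).IsLowerTriangular := fun _ _ hij =>
  hX (Fin.rev_lt_rev.mpr hij)

lemma blockTriangular_fromBlocks_zero₁₂_of_isLowerTriangular {m n : ℕ} {R : Type*} [Zero R]
    {a : Matrix (Fin m) (Fin m) R} {d : Matrix (Fin n) (Fin n) R} (c : Matrix (Fin n) (Fin m) R)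
    (ha : a.IsLowerTriangular) (hd : d.IsLowerTriangular) :
    (fromBlocks a 0 c d).BlockTriangular (OrderDual.toDual ∘ finSumFinEquiv) := by
  rintro (i | i) (j | j) hij <;>
    simp only [Function.comp_apply, finSumFinEquiv_apply_left, finSumFinEquiv_apply_right,
      OrderDual.toDual_lt_toDual, Fin.lt_def, Fin.val_castAdd, Fin.val_natAdd] at hij
  · exact ha (OrderDual.toDual_lt_toDual.mpr (Fin.lt_def.mpr hij))
  · rfl
  · omega
  · exact hd (OrderDual.toDual_lt_toDual.mpr (Fin.lt_def.mpr (by omega)))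

section Antidiagonal

variable {n : ℕ} {R : Type*} [CommRing R]

lemma wMat_eq_submatrix_one :
    wMat n R = (1 : Matrix (Fin n) (Fin n) R).submatrix Fin.revPerm id := by
  ext i j
  simp only [wMat, submatrix_apply, Fin.revPerm_apply, id_eq, one_apply, Fin.ext_iff, Fin.val_rev]
  congr 1
  apply propext
  omega

lemma wMat_mul {m : Type*} (X : Matrix (Fin n) m R) : wMat n R * X = X.submatrix Fin.rev id := by
  rw [wMat_eq_submatrix_one, ← Equiv.coe_refl, one_submatrix_mul]
  rfl

lemma mul_wMat {m : Type*} (X : Matrix m (Fin n) R) : X * wMat n R = X.submatrix id Fin.rev := by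
  rw [wMat_eq_submatrix_one, ← Equiv.coe_refl, mul_submatrix_one]
  rfl

lemma wMat_mul_wMat : wMat n R * wMat n R = 1 := by
  simp [wMat_eq_submatrix_one]

lemma wMat_mul_submatrix_rev_mul_wMat (X : Matrix (Fin n) (Fin n) R) :
    wMat n R * X.submatrix Fin.rev Fin.rev * wMat n R = X := by
  simp [wMat_mul, mul_wMat, submatrix_submatrix, Fin.rev_involutive.comp_self]

lemma xiMat_mul_fromBlocks_mul_xiInvMat (a c U : Matrix (Fin n) (Fin n) R) :
    xiMat n R * fromBlocks a 0 (wMat n R * c) (U.submatrix Fin.rev Fin.rev) * xiInvMat n R =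
      fromBlocks (a + c) (U - a - c) c (U - c) := by
  simp only [xiMat, xiInvMat, fromBlocks_multiply]
  simp only [Matrix.one_mul, Matrix.mul_one, Matrix.zero_mul, Matrix.mul_zero, add_zero, zero_add,
    Matrix.mul_neg, ← Matrix.mul_assoc, wMat_mul_wMat, wMat_mul_submatrix_rev_mul_wMat]
  congr 1 <;> abel

end Antidiagonal

theorem statement0_general (n : ℕ) (R : Type*) [CommRing R]
    (M : Matrix (Fin n ⊕ Fin n) (Fin n ⊕ Fin n) R) :
    ∃ (h₁ h₂ : Matrix (Fin n) (Fin n) R)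
      (L : Matrix (Fin n ⊕ Fin n) (Fin n ⊕ Fin n) R),
      (∀ i j : Fin n ⊕ Fin n,
          (finSumFinEquiv i : ℕ) < (finSumFinEquiv j : ℕ) → L i j = 0) ∧
      M = iotaBlk h₁ h₂ + xiMat n R * L * xiInvMat n R := by
  obtain ⟨A, B, C, D, rfl⟩ : ∃ A B C D, M = fromBlocks A B C D :=
    ⟨_, _, _, _, (fromBlocks_toBlocks M).symm⟩
  refine ⟨A - C + strictLowerPart (B + C), D - B + strictLowerPart (B + C),
    fromBlocks (-strictLowerPart (B + C)) 0 (wMat n R * C)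
      ((B + C - strictLowerPart (B + C)).submatrix Fin.rev Fin.rev),
    fun _ _ hij => blockTriangular_fromBlocks_zero₁₂_of_isLowerTriangular _ ?_ ?_ hij, ?_⟩
  · exact (strictLowerPart_isLowerTriangular _).neg
  · exact (sub_strictLowerPart_isUpperTriangular _).submatrix_rev
  · rw [xiMat_mul_fromBlocks_mul_xiInvMat, iotaBlk, fromBlocks_add]
    congr 1 <;> abel

/-- Every `2n × 2n` matrix `M` over a commutative ring `R` may be written as
`M = ι(h₁, h₂) + ξ · L · ξ⁻¹` with `L` lower triangular:
`gl_{2n} = h + ξ b⁻ ξ⁻¹`. -/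
theorem statement0 (n : ℕ) (hn : 1 ≤ n) (R : Type*) [CommRing R]
    (M : Matrix (Fin n ⊕ Fin n) (Fin n ⊕ Fin n) R) :
    ∃ (h₁ h₂ : Matrix (Fin n) (Fin n) R)
      (L : Matrix (Fin n ⊕ Fin n) (Fin n ⊕ Fin n) R),
      (∀ i j : Fin n ⊕ Fin n,
          (finSumFinEquiv i : ℕ) < (finSumFinEquiv j : ℕ) → L i j = 0) ∧
      M = iotaBlk h₁ h₂ + xiMat n R * L * xiInvMat n R :=
  statement0_general n R M
end

section
/- Let n ≥ 1, let R be a commutative ring, and let n₁, n₂ ∈ M_n(R) be strictly upper triangular. Then there exist h₁, h₂ ∈ M_n(R), each lying in the R-linear span of commutators [a,b] = ab − ba of pairs of matrices a, b ∈ M_n(R), and a strictly lower triangular matrix N ∈ M_{2n}(R), such that ξ·ι(n₁,n₂)·ξ^{-1} = ι(h₁,h₂) + ξ·N·ξ^{-1}. (This is the containment ξ(n ∩ h)ξ^{-1} ⊆ [h,h] + ξ n⁻ ξ^{-1}, where n ∩ h consists of pairs of strictly upper triangular matrices and n⁻ is the strictly lower triangular nilpotent subalgebra.) -/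
/-!
Conjugation by `ξ` sends `ι(A, D)` to `[[A, w D w - A], [0, w D w]]`, so it sends `ι(A, w A w)` to
`ι(A, A)`. Write `ι(n₁, n₂) = ι(h, w h w) + N` with `h = n₁ + w n₂ w` and
`N = ι(-w n₂ w, -w n₁ w)`. Reversing rows and columns with `w` turns strictly upper triangular
matrices into strictly lower triangular ones, so `N` is strictly lower triangular, and `h` has zero
diagonal, hence is a sum of off-diagonal matrix units `E_ij = [E_ii, E_ij]`.
-/

open Matrix

/-- The `R`-linear span of commutators `[a,b] = ab - ba` in `M_n(R)`. -/
def commutatorSpan (n : ℕ) (R : Type*) [CommRing R] :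
    Submodule R (Matrix (Fin n) (Fin n) R) :=
  Submodule.span R {x | ∃ a b : Matrix (Fin n) (Fin n) R, x = a * b - b * a}

section

variable {n : ℕ} {R : Type*} [CommRing R]

lemma wMat_apply (i j : Fin n) : wMat n R i j = if j = i.rev then 1 else 0 := by
  unfold wMat
  congr 1
  simp only [eq_iff_iff, Fin.ext_iff, Fin.val_rev]
  omega

lemma wMat_mul_s1 (M : Matrix (Fin n) (Fin n) R) :
    wMat n R * M = Matrix.of fun i j => M i.rev j := by
  ext i j
  simp [Matrix.mul_apply, wMat_apply]

lemma mul_wMat_s1 (M : Matrix (Fin n) (Fin n) R) :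
    M * wMat n R = Matrix.of fun i j => M i j.rev := by
  ext i j
  simp [Matrix.mul_apply, wMat_apply, eq_comm (a := j), Fin.rev_eq_iff]

lemma wMat_mul_mul_wMat_apply (M : Matrix (Fin n) (Fin n) R) (i j : Fin n) :
    (wMat n R * M * wMat n R) i j = M i.rev j.rev := by
  rw [mul_wMat_s1, wMat_mul_s1]
  rfl

lemma wMat_mul_wMat_mul (M : Matrix (Fin n) (Fin n) R) : wMat n R * (wMat n R * M) = M := by
  rw [← mul_assoc, wMat_mul_wMat, one_mul]

lemma wMat_mul_mul_wMat_apply_eq_zero_of_le {M : Matrix (Fin n) (Fin n) R}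
    (hM : ∀ i j : Fin n, j ≤ i → M i j = 0) (i j : Fin n) (hij : i ≤ j) :
    (wMat n R * M * wMat n R) i j = 0 := by
  rw [wMat_mul_mul_wMat_apply]
  exact hM _ _ (Fin.rev_le_rev.mpr hij)

lemma mem_commutatorSpan_of_diag_eq_zero {M : Matrix (Fin n) (Fin n) R} (h : ∀ i, M i i = 0) :
    M ∈ commutatorSpan n R := by
  rw [Matrix.matrix_eq_sum_single M]
  refine Submodule.sum_mem _ fun i _ => Submodule.sum_mem _ fun j _ => ?_
  obtain rfl | hij := eq_or_ne i j
  · simp [h]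
  · have hcomm : single i j (M i j) =
        single i i 1 * single i j (M i j) - single i j (M i j) * single i i 1 := by
      rw [single_mul_single_same, single_mul_single_of_ne (h := hij.symm), one_mul, sub_zero]
    exact hcomm ▸ Submodule.subset_span ⟨_, _, rfl⟩

lemma xiMat_mul_iotaBlk_mul_xiInvMat (A D : Matrix (Fin n) (Fin n) R) :
    xiMat n R * iotaBlk A D * xiInvMat n R =
      fromBlocks A (wMat n R * D * wMat n R - A) 0 (wMat n R * D * wMat n R) := by
  simp only [xiMat, xiInvMat, iotaBlk, fromBlocks_multiply]
  congr 1 <;> noncomm_ring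

lemma xiMat_mul_iotaBlk_conj_mul_xiInvMat (A : Matrix (Fin n) (Fin n) R) :
    xiMat n R * iotaBlk A (wMat n R * A * wMat n R) * xiInvMat n R = iotaBlk A A := by
  have hw : wMat n R * (wMat n R * A * wMat n R) * wMat n R = A := by
    simp only [mul_assoc, wMat_mul_wMat_mul, wMat_mul_wMat, mul_one]
  rw [xiMat_mul_iotaBlk_mul_xiInvMat, hw, sub_self, iotaBlk]

lemma iotaBlk_apply_eq_zero_of_le {A D : Matrix (Fin n) (Fin n) R}
    (hA : ∀ i j : Fin n, i ≤ j → A i j = 0) (hD : ∀ i j : Fin n, i ≤ j → D i j = 0) (i j : Fin n ⊕ Fin n)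
    (hij : (finSumFinEquiv i : ℕ) ≤ (finSumFinEquiv j : ℕ)) : iotaBlk A D i j = 0 := by
  rcases i with i | i <;> rcases j with j | j <;>
    simp only [finSumFinEquiv_apply_left, finSumFinEquiv_apply_right, Fin.val_castAdd,
      Fin.val_natAdd] at hij
  · exact hA i j hij
  · rfl
  · omega
  · exact hD i j (by simpa using hij)

end

theorem statement1_general (n : ℕ) (R : Type*) [CommRing R]
    (n₁ n₂ : Matrix (Fin n) (Fin n) R)
    (hn₁ : ∀ i j : Fin n, j ≤ i → n₁ i j = 0)
    (hn₂ : ∀ i j : Fin n, j ≤ i → n₂ i j = 0) :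
    ∃ (h₁ h₂ : Matrix (Fin n) (Fin n) R)
      (N : Matrix (Fin n ⊕ Fin n) (Fin n ⊕ Fin n) R),
      h₁ ∈ commutatorSpan n R ∧ h₂ ∈ commutatorSpan n R ∧
      (∀ i j : Fin n ⊕ Fin n,
          (finSumFinEquiv i : ℕ) ≤ (finSumFinEquiv j : ℕ) → N i j = 0) ∧
      xiMat n R * iotaBlk n₁ n₂ * xiInvMat n R =
        iotaBlk h₁ h₂ + xiMat n R * N * xiInvMat n R := by
  set w := wMat n R
  set h := n₁ + w * n₂ * w
  have hh : h ∈ commutatorSpan n R := mem_commutatorSpan_of_diag_eq_zero fun i => by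
    simp [h, w, wMat_mul_mul_wMat_apply, hn₁ i i le_rfl, hn₂ i.rev i.rev le_rfl]
  have hwhw : w * h * w = w * n₁ * w + n₂ := by
    simp only [h, w, mul_add, add_mul, mul_assoc, wMat_mul_wMat_mul, wMat_mul_wMat, mul_one]
  refine ⟨h, h, iotaBlk (-(w * n₂ * w)) (-(w * n₁ * w)), hh, hh, ?_, ?_⟩
  · refine iotaBlk_apply_eq_zero_of_le (fun i j hij => ?_) (fun i j hij => ?_)
    · exact neg_eq_zero.mpr (wMat_mul_mul_wMat_apply_eq_zero_of_le hn₂ i j hij)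
    · exact neg_eq_zero.mpr (wMat_mul_mul_wMat_apply_eq_zero_of_le hn₁ i j hij)
  · have hsplit : iotaBlk n₁ n₂ =
        iotaBlk h (w * h * w) + iotaBlk (-(w * n₂ * w)) (-(w * n₁ * w)) := by
      simp only [iotaBlk, fromBlocks_add, hwhw, h]
      congr 1 <;> abel
    rw [hsplit, mul_add, add_mul, xiMat_mul_iotaBlk_conj_mul_xiInvMat]

/-- If `n₁, n₂ ∈ M_n(R)` are strictly upper triangular, then
`ξ · ι(n₁,n₂) · ξ⁻¹ = ι(h₁,h₂) + ξ · N · ξ⁻¹` with `h₁, h₂` in the span of commutators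
and `N` strictly lower triangular: `ξ (n ∩ h) ξ⁻¹ ⊆ [h,h] + ξ n⁻ ξ⁻¹`. -/
theorem statement1 (n : ℕ) (hn : 1 ≤ n) (R : Type*) [CommRing R]
    (n₁ n₂ : Matrix (Fin n) (Fin n) R)
    (hn₁ : ∀ i j : Fin n, j ≤ i → n₁ i j = 0)
    (hn₂ : ∀ i j : Fin n, j ≤ i → n₂ i j = 0) :
    ∃ (h₁ h₂ : Matrix (Fin n) (Fin n) R)
      (N : Matrix (Fin n ⊕ Fin n) (Fin n ⊕ Fin n) R),
      h₁ ∈ commutatorSpan n R ∧ h₂ ∈ commutatorSpan n R ∧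
      (∀ i j : Fin n ⊕ Fin n,
          (finSumFinEquiv i : ℕ) ≤ (finSumFinEquiv j : ℕ) → N i j = 0) ∧
      xiMat n R * iotaBlk n₁ n₂ * xiInvMat n R =
        iotaBlk h₁ h₂ + xiMat n R * N * xiInvMat n R :=
  statement1_general n R n₁ n₂ hn₁ hn₂
end

section
/- Let R be a local ring with maximal ideal m and let n ≥ 1. Let g = [[A,B],[C,D]] ∈ GL_{2n}(R) with all entries of the lower-left block C in m. Then A and D are invertible, and g admits factorizations g = [[1_n,0],[X,1_n]]·q and g = q'·[[1_n,0],[X',1_n]], where X, X' ∈ M_n(m) and q, q' are block upper triangular matrices of the form [[A*,B*],[0,D*]] with A*, D* ∈ GL_n(R) and B* ∈ M_n(R). (Parahoric decomposition: J = (J ∩ U⁻)·Q(O) = Q(O)·(J ∩ U⁻).) -/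
open Matrix

section Aux

variable {R : Type*} [CommRing R] [IsLocalRing R] {n : ℕ}

private lemma aux_isUnit (M : Matrix (Fin n) (Fin n) R)
    (h : (M.map (IsLocalRing.residue R)).det ≠ 0) : IsUnit M := by
  rw [← RingHom.mapMatrix_apply, ← RingHom.map_det] at h
  refine (Matrix.isUnit_iff_isUnit_det M).mpr ?_
  refine IsLocalRing.notMem_maximalIdeal.mp fun hm => h ?_
  exact Ideal.Quotient.eq_zero_iff_mem.mpr hm

private lemma aux_map_zero (M : Matrix (Fin n) (Fin n) R)
    (h : ∀ i j, M i j ∈ IsLocalRing.maximalIdeal R) :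
    M.map (IsLocalRing.residue R) = 0 := by
  ext i j
  exact Ideal.Quotient.eq_zero_iff_mem.mpr (h i j)

end Aux

/-- Parahoric decomposition over a local ring: if `g = [[A,B],[C,D]] ∈ GL_{2n}(R)` has all
entries of `C` in the maximal ideal `m`, then `A` and `D` are invertible and
`g = [[1,0],[X,1]] · q = q' · [[1,0],[X',1]]` with `X, X' ∈ M_n(m)` and `q, q'` block upper
triangular with invertible diagonal blocks. -/
theorem statement5 (n : ℕ) (hn : 1 ≤ n) (R : Type*) [CommRing R] [IsLocalRing R]
    (A B C D : Matrix (Fin n) (Fin n) R)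
    (hC : ∀ i j : Fin n, C i j ∈ IsLocalRing.maximalIdeal R)
    (hg : IsUnit (Matrix.fromBlocks A B C D)) :
    IsUnit A ∧ IsUnit D ∧
    (∃ (X Astar Bstar Dstar : Matrix (Fin n) (Fin n) R),
      (∀ i j : Fin n, X i j ∈ IsLocalRing.maximalIdeal R) ∧
      IsUnit Astar ∧ IsUnit Dstar ∧
      Matrix.fromBlocks A B C D =
        Matrix.fromBlocks 1 0 X 1 * Matrix.fromBlocks Astar Bstar 0 Dstar) ∧
    (∃ (X' Astar' Bstar' Dstar' : Matrix (Fin n) (Fin n) R),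
      (∀ i j : Fin n, X' i j ∈ IsLocalRing.maximalIdeal R) ∧
      IsUnit Astar' ∧ IsUnit Dstar' ∧
      Matrix.fromBlocks A B C D =
        Matrix.fromBlocks Astar' Bstar' 0 Dstar' * Matrix.fromBlocks 1 0 X' 1) := by
  set φ := IsLocalRing.residue R
  -- det of the reduction
  have hgd : IsUnit ((Matrix.fromBlocks A B C D).det) :=
    (Matrix.isUnit_iff_isUnit_det _).mp hg
  have hC0 : C.map φ = 0 := aux_map_zero C hC
  have hdet : (A.map φ).det * (D.map φ).det ≠ 0 := by
    have : φ ((Matrix.fromBlocks A B C D).det) ≠ 0 := by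
      have := hgd.map φ
      exact this.ne_zero
    rw [RingHom.map_det, RingHom.mapMatrix_apply, Matrix.fromBlocks_map, hC0, Matrix.det_fromBlocks_zero₂₁] at this
    exact this
  have hAd : (A.map φ).det ≠ 0 := left_ne_zero_of_mul hdet
  have hDd : (D.map φ).det ≠ 0 := right_ne_zero_of_mul hdet
  have hA : IsUnit A := aux_isUnit A hAd
  have hD : IsUnit D := aux_isUnit D hDd
  have hAdet : IsUnit A.det := (Matrix.isUnit_iff_isUnit_det A).mp hA
  have hDdet : IsUnit D.det := (Matrix.isUnit_iff_isUnit_det D).mp hD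
  refine ⟨hA, hD, ?_, ?_⟩
  · -- first factorization: X = C * A⁻¹
    set X := C * A⁻¹ with hX
    have hXm : ∀ i j, X i j ∈ IsLocalRing.maximalIdeal R := by
      intro i j
      simp only [hX, Matrix.mul_apply]
      exact Ideal.sum_mem _ fun k _ => Ideal.mul_mem_right _ _ (hC i k)
    have hXA : X * A = C := by
      rw [hX, Matrix.mul_assoc, Matrix.nonsing_inv_mul A hAdet, Matrix.mul_one]
    refine ⟨X, A, B, D - X * B, hXm, hA, ?_, ?_⟩
    · refine aux_isUnit _ ?_
      rw [← RingHom.mapMatrix_apply, map_sub, _root_.map_mul, RingHom.mapMatrix_apply,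
        RingHom.mapMatrix_apply, RingHom.mapMatrix_apply, aux_map_zero X hXm, Matrix.zero_mul,
        sub_zero]
      exact hDd
    · rw [Matrix.fromBlocks_multiply]
      congr 1 <;> simp [hXA]
  · -- second factorization: X' = D⁻¹ * C
    set X' := D⁻¹ * C with hX'
    have hX'm : ∀ i j, X' i j ∈ IsLocalRing.maximalIdeal R := by
      intro i j
      simp only [hX', Matrix.mul_apply]
      exact Ideal.sum_mem _ fun k _ => Ideal.mul_mem_left _ _ (hC k j)
    have hDX : D * X' = C := by
      rw [hX', ← Matrix.mul_assoc, Matrix.mul_nonsing_inv D hDdet, Matrix.one_mul]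
    refine ⟨X', A - B * X', B, D, hX'm, ?_, hD, ?_⟩
    · refine aux_isUnit _ ?_
      rw [← RingHom.mapMatrix_apply, map_sub, _root_.map_mul, RingHom.mapMatrix_apply,
        RingHom.mapMatrix_apply, RingHom.mapMatrix_apply, aux_map_zero X' hX'm, Matrix.mul_zero,
        sub_zero]
      exact hAd
    · rw [Matrix.fromBlocks_multiply]
      congr 1 <;> simp [hDX]
end

section
/- Let O be a discrete valuation ring with uniformizer ϖ and fraction field F, let n ≥ 1, let J be the parahoric subgroup of GL_{2n}(O), and set t := ι(ϖ·1_n, 1_n). Let Rep ⊆ M_n(O) be any set of representatives for the quotient M_n(O)/ϖM_n(O). Then the double coset J·t·J is the union over m ∈ Rep of the right cosets [[1_n, m],[0, 1_n]]·t·J, and these cosets are pairwise disjoint for distinct m ∈ Rep. -/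
/-!
Write `g ∈ J` as `[[A, B], [C, D]]`. As `ϖ ∣ C`, the block `D` is invertible modulo `ϖ`, so
`B ≡ m D (mod ϖ)` for the representative `m` of `B D⁻¹`, and then
`g t = [[1, m], [0, 1]] · t · [[A - m C, (B - m D) / ϖ], [ϖ C, D]]`, where the last factor lies
in `J` because it has the same determinant as `g`. Conversely, if two cosets
`[[1, m], [0, 1]] t J` and `[[1, m'], [0, 1]] t J` meet, then `[[1, m - m'], [0, 1]] t ∈ t J`,
and comparing upper-right blocks gives `m ≡ m' (mod ϖ)`.
-/

open Matrix

/-- The matrix `t(a) = ι(a·1_n, 1_n)`. -/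
def tMat (n : ℕ) (R : Type*) [CommRing R] (a : R) :
    Matrix (Fin n ⊕ Fin n) (Fin n ⊕ Fin n) R :=
  iotaBlk (a • (1 : Matrix (Fin n) (Fin n) R)) 1

/-- `g ∈ GL_m(O)`: `g` is invertible and both `g` and its inverse have entries in (the image
of) `O`. -/
def inGLO (O F : Type*) [CommRing O] [CommRing F] [Algebra O F]
    {m : Type*} [Fintype m] [DecidableEq m] (g : Matrix m m F) : Prop :=
  ∃ g' : Matrix m m F, g * g' = 1 ∧ g' * g = 1 ∧
    (∀ i j, g i j ∈ (algebraMap O F).range) ∧ (∀ i j, g' i j ∈ (algebraMap O F).range)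

/-- `g ∈ J`, the parahoric subgroup of type `(n,n)`: `g ∈ GL_{2n}(O)` and the lower-left
`n × n` block of `g` has all entries in `ϖO`. -/
def inParahoric (O F : Type*) [CommRing O] [CommRing F] [Algebra O F] (ϖ : O)
    {n : ℕ} (g : Matrix (Fin n ⊕ Fin n) (Fin n ⊕ Fin n) F) : Prop :=
  inGLO O F g ∧
    ∀ i j : Fin n, ∃ c : O, g (Sum.inr i) (Sum.inl j) = algebraMap O F (ϖ * c)

/-- The right coset `[[1, m],[0, 1]] · t · J` for a representative `m ∈ M_n(O)`. -/
def cosetOf (n : ℕ) (O F : Type*) [CommRing O] [CommRing F] [Algebra O F] (ϖ : O)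
    (m : Matrix (Fin n) (Fin n) O) : Set (Matrix (Fin n ⊕ Fin n) (Fin n ⊕ Fin n) F) :=
  {g | ∃ k, inParahoric O F ϖ k ∧
    g = Matrix.fromBlocks 1 (m.map (algebraMap O F)) 0 1 * tMat n F (algebraMap O F ϖ) * k}

section Blocks

variable {R : Type*} [CommRing R] {l m : Type*} [Fintype l] [Fintype m]
  [DecidableEq l] [DecidableEq m]

theorem exists_toBlocks₁₂_sub_mul_mem (I : Ideal R) {M : Matrix (l ⊕ m) (l ⊕ m) R}
    (hM : IsUnit M.det) (hC : ∀ i j, M.toBlocks₂₁ i j ∈ I) :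
    ∃ X : Matrix l m R, ∀ i j, (M.toBlocks₁₂ - X * M.toBlocks₂₂) i j ∈ I := by
  set π := Ideal.Quotient.mk I
  have hCπ : M.toBlocks₂₁.map π = 0 := by
    ext i j; exact Ideal.Quotient.eq_zero_iff_mem.mpr (hC i j)
  have hDπ : IsUnit (M.toBlocks₂₂.map π).det := by
    have h : IsUnit (π.mapMatrix M).det := by rw [← RingHom.map_det]; exact hM.map π
    rw [RingHom.mapMatrix_apply, ← fromBlocks_toBlocks M, fromBlocks_map, hCπ,
      det_fromBlocks_zero₂₁] at h
    exact isUnit_of_mul_isUnit_right h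
  choose W hW using fun i j => Ideal.Quotient.mk_surjective ((M.toBlocks₂₂.map π)⁻¹ i j)
  refine ⟨M.toBlocks₁₂ * Matrix.of W, fun i j => Ideal.Quotient.eq_zero_iff_mem.mp ?_⟩
  have hWπ : (Matrix.of W).map π = (M.toBlocks₂₂.map π)⁻¹ := by ext i j; exact hW i j
  have h0 : (M.toBlocks₁₂ - M.toBlocks₁₂ * Matrix.of W * M.toBlocks₂₂).map π = 0 := by
    rw [Matrix.map_sub _ (map_sub π), Matrix.map_mul, Matrix.map_mul, hWπ, Matrix.mul_assoc,
      nonsing_inv_mul _ hDπ, Matrix.mul_one, sub_self]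
  exact congrFun (congrFun h0 i) j

end Blocks

section Parahoric

variable {O : Type*} [CommRing O] (ϖ : O)

def IsParahoric {l m : Type*} [Fintype l] [Fintype m] [DecidableEq l] [DecidableEq m]
    (K : Matrix (l ⊕ m) (l ⊕ m) O) : Prop :=
  IsUnit K ∧ ∀ i j, ϖ ∣ K (Sum.inr i) (Sum.inl j)

variable {ϖ} {n : ℕ}

theorem IsParahoric.mul {l m : Type*} [Fintype l] [Fintype m] [DecidableEq l] [DecidableEq m]
    {K K' : Matrix (l ⊕ m) (l ⊕ m) O} (hK : IsParahoric ϖ K) (hK' : IsParahoric ϖ K') :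
    IsParahoric ϖ (K * K') := by
  refine ⟨hK.1.mul hK'.1, fun i j => ?_⟩
  rw [mul_apply, Fintype.sum_sum_type]
  exact dvd_add (Finset.dvd_sum fun k _ => dvd_mul_of_dvd_left (hK.2 i k) _)
    (Finset.dvd_sum fun k _ => dvd_mul_of_dvd_right (hK'.2 k j) _)

def upperUnipotent (m : Matrix (Fin n) (Fin n) O) : Matrix (Fin n ⊕ Fin n) (Fin n ⊕ Fin n) O :=
  fromBlocks 1 m 0 1

theorem upperUnipotent_mul_upperUnipotent (a b : Matrix (Fin n) (Fin n) O) :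
    upperUnipotent a * upperUnipotent b = upperUnipotent (a + b) := by
  simp [upperUnipotent, fromBlocks_multiply, add_comm]

theorem upperUnipotent_zero : upperUnipotent (0 : Matrix (Fin n) (Fin n) O) = 1 :=
  fromBlocks_one

theorem isParahoric_upperUnipotent (m : Matrix (Fin n) (Fin n) O) :
    IsParahoric ϖ (upperUnipotent m) := by
  refine ⟨IsUnit.of_mul_eq_one (upperUnipotent (-m)) ?_, fun i j => ?_⟩
  · rw [upperUnipotent_mul_upperUnipotent, add_neg_cancel, upperUnipotent_zero]
  · simp [upperUnipotent]

theorem upperUnipotent_mul_tMat_mul_fromBlocks {a : O} {A B C D E m : Matrix (Fin n) (Fin n) O}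
    (hE : a • E = B - m * D) :
    upperUnipotent m * tMat n O a * fromBlocks (A - m * C) E (a • C) D
      = fromBlocks A B C D * tMat n O a := by
  simp only [upperUnipotent, tMat, iotaBlk, fromBlocks_multiply]
  congr 1 <;> simp [mul_sub, hE]

theorem toBlocks₁₂_upperUnipotent_mul_tMat (m : Matrix (Fin n) (Fin n) O) (a : O) :
    (upperUnipotent m * tMat n O a).toBlocks₁₂ = m := by
  simp [upperUnipotent, tMat, iotaBlk, fromBlocks_multiply]

theorem toBlocks₁₂_tMat_mul (a : O) (Z : Matrix (Fin n ⊕ Fin n) (Fin n ⊕ Fin n) O) :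
    (tMat n O a * Z).toBlocks₁₂ = a • Z.toBlocks₁₂ := by
  conv_lhs => rw [← fromBlocks_toBlocks Z]
  simp [tMat, iotaBlk, fromBlocks_multiply]

theorem det_tMat (a : O) : (tMat n O a).det = a ^ n := by
  simp [tMat, iotaBlk]

theorem exists_isParahoric_mul_tMat_eq_of_dvd [IsDomain O] (hϖ : ϖ ≠ 0)
    {J : Matrix (Fin n ⊕ Fin n) (Fin n ⊕ Fin n) O} (hJ : IsParahoric ϖ J)
    {m : Matrix (Fin n) (Fin n) O} (hm : ∀ i j, ϖ ∣ (J.toBlocks₁₂ - m * J.toBlocks₂₂) i j) :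
    ∃ H, IsParahoric ϖ H ∧ J * tMat n O ϖ = upperUnipotent m * tMat n O ϖ * H := by
  choose E hEij using hm
  have hE : ϖ • Matrix.of E = J.toBlocks₁₂ - m * J.toBlocks₂₂ := by
    ext i j; exact (hEij i j).symm
  set H := fromBlocks (J.toBlocks₁₁ - m * J.toBlocks₂₁) (Matrix.of E) (ϖ • J.toBlocks₂₁)
    J.toBlocks₂₂
  have hJt : upperUnipotent m * tMat n O ϖ * H = J * tMat n O ϖ := by
    rw [upperUnipotent_mul_tMat_mul_fromBlocks hE, fromBlocks_toBlocks]
  have hdet : H.det = J.det := by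
    have h := congrArg det hJt
    simp only [det_mul, upperUnipotent, det_fromBlocks_zero₂₁, det_one, mul_one, one_mul,
      det_tMat] at h
    exact mul_left_cancel₀ (pow_ne_zero n hϖ) (h.trans (mul_comm _ _))
  refine ⟨H, ⟨?_, fun i j => ?_⟩, hJt.symm⟩
  · rw [isUnit_iff_isUnit_det, hdet, ← isUnit_iff_isUnit_det]
    exact hJ.1
  · simp [H]

theorem exists_isParahoric_mul_tMat_eq [IsDomain O] (hϖ : ϖ ≠ 0)
    {J : Matrix (Fin n ⊕ Fin n) (Fin n ⊕ Fin n) O} (hJ : IsParahoric ϖ J) :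
    ∃ m₀ : Matrix (Fin n) (Fin n) O, ∀ m, (∀ i j, ϖ ∣ m₀ i j - m i j) →
      ∃ H, IsParahoric ϖ H ∧ J * tMat n O ϖ = upperUnipotent m * tMat n O ϖ * H := by
  obtain ⟨m₀, hm₀⟩ := exists_toBlocks₁₂_sub_mul_mem (Ideal.span {ϖ})
    ((isUnit_iff_isUnit_det J).1 hJ.1) fun i j => Ideal.mem_span_singleton.2 (hJ.2 i j)
  refine ⟨m₀, fun m hm => exists_isParahoric_mul_tMat_eq_of_dvd hϖ hJ fun i j => ?_⟩
  have hsplit : J.toBlocks₁₂ - m * J.toBlocks₂₂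
      = (J.toBlocks₁₂ - m₀ * J.toBlocks₂₂) + (m₀ - m) * J.toBlocks₂₂ := by
    rw [sub_mul]; abel
  rw [hsplit, Matrix.add_apply, mul_apply]
  exact dvd_add (Ideal.mem_span_singleton.1 (hm₀ i j))
    (Finset.dvd_sum fun k _ => dvd_mul_of_dvd_left (hm i k) _)

theorem dvd_sub_of_upperUnipotent_mul_tMat_mul_eq {m m' : Matrix (Fin n) (Fin n) O}
    {K K' : Matrix (Fin n ⊕ Fin n) (Fin n ⊕ Fin n) O} (hK : IsUnit K)
    (h : upperUnipotent m * tMat n O ϖ * K = upperUnipotent m' * tMat n O ϖ * K') (i j : Fin n) :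
    ϖ ∣ m i j - m' i j := by
  have hK' : upperUnipotent m * tMat n O ϖ = upperUnipotent m' * tMat n O ϖ * K' * K⁻¹ := by
    rw [← h, mul_nonsing_inv_cancel_right _ _ ((isUnit_iff_isUnit_det K).1 hK)]
  have hdiff : upperUnipotent (m - m') * tMat n O ϖ = tMat n O ϖ * (K' * K⁻¹) := by
    rw [sub_eq_neg_add, ← upperUnipotent_mul_upperUnipotent, mul_assoc, hK']
    simp only [← mul_assoc, upperUnipotent_mul_upperUnipotent, neg_add_cancel,
      upperUnipotent_zero, one_mul]
  have h12 := congrArg (fun Z => Z.toBlocks₁₂ i j) hdiff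
  simp only [toBlocks₁₂_upperUnipotent_mul_tMat, toBlocks₁₂_tMat_mul, Matrix.smul_apply,
    smul_eq_mul, Matrix.sub_apply] at h12
  exact ⟨_, h12⟩

end Parahoric

section FractionField

variable {n : ℕ} {O F : Type*} [CommRing O] [CommRing F] [Algebra O F] {ϖ : O}

theorem map_tMat : (tMat n O ϖ).map (algebraMap O F) = tMat n F (algebraMap O F ϖ) := by
  ext (i | i) (j | j) <;>
    simp [tMat, iotaBlk, one_apply, apply_ite (algebraMap O F), Algebra.algebraMap_eq_smul_one]

theorem map_upperUnipotent (m : Matrix (Fin n) (Fin n) O) :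
    (upperUnipotent m).map (algebraMap O F) = fromBlocks 1 (m.map (algebraMap O F)) 0 1 := by
  simp [upperUnipotent, fromBlocks_map]

variable [IsFractionRing O F]

theorem inParahoric_iff {g : Matrix (Fin n ⊕ Fin n) (Fin n ⊕ Fin n) F} :
    inParahoric O F ϖ g ↔ ∃ K, IsParahoric ϖ K ∧ K.map (algebraMap O F) = g := by
  have hinj := IsFractionRing.injective O F
  have hmap_one := Matrix.map_one (algebraMap O F) (map_zero _) (map_one _)
    (n := Fin n ⊕ Fin n)
  constructor
  · rintro ⟨⟨g', hgg', -, hg, hg'⟩, hdvd⟩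
    choose K hK using hg
    choose K' hK' using hg'
    have hKg : (Matrix.of K).map (algebraMap O F) = g := by ext i j; exact hK i j
    have hKg' : (Matrix.of K').map (algebraMap O F) = g' := by ext i j; exact hK' i j
    refine ⟨Matrix.of K, ⟨IsUnit.of_mul_eq_one (Matrix.of K') ?_, fun i j => ?_⟩, hKg⟩
    · apply map_injective hinj
      dsimp only
      rw [Matrix.map_mul, hKg, hKg', hgg', hmap_one]
    · obtain ⟨c, hc⟩ := hdvd i j
      exact ⟨c, hinj (by rw [← hc, ← hKg, map_apply])⟩
  · rintro ⟨K, ⟨⟨u, rfl⟩, hdvd⟩, rfl⟩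
    refine ⟨⟨(↑u⁻¹ : Matrix _ _ O).map (algebraMap O F), ?_, ?_,
      fun i j => ⟨_, rfl⟩, fun i j => ⟨_, rfl⟩⟩, fun i j => ?_⟩
    · rw [← Matrix.map_mul, u.mul_inv, hmap_one]
    · rw [← Matrix.map_mul, u.inv_mul, hmap_one]
    · obtain ⟨c, hc⟩ := hdvd i j
      exact ⟨c, by rw [map_apply, hc]⟩

theorem mem_cosetOf_iff {m : Matrix (Fin n) (Fin n) O}
    {g : Matrix (Fin n ⊕ Fin n) (Fin n ⊕ Fin n) F} :
    g ∈ cosetOf n O F ϖ m ↔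
      ∃ K, IsParahoric ϖ K ∧ (upperUnipotent m * tMat n O ϖ * K).map (algebraMap O F) = g := by
  simp only [cosetOf, Set.mem_ofPred_eq, inParahoric_iff, Matrix.map_mul, map_upperUnipotent,
    map_tMat]
  constructor
  · rintro ⟨_, ⟨K, hK, rfl⟩, rfl⟩
    exact ⟨K, hK, rfl⟩
  · rintro ⟨K, hK, rfl⟩
    exact ⟨_, ⟨K, hK, rfl⟩, rfl⟩

end FractionField

theorem statement7_general (n : ℕ)
    (O : Type*) [CommRing O] [IsDomain O]
    (F : Type*) [Field F] [Algebra O F] [IsFractionRing O F]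
    (ϖ : O) (hϖ : Irreducible ϖ)
    (Rep : Set (Matrix (Fin n) (Fin n) O))
    (hRep : ∀ X : Matrix (Fin n) (Fin n) O,
      ∃! r, r ∈ Rep ∧ ∀ i j : Fin n, ∃ c : O, X i j - r i j = ϖ * c) :
    ({g | ∃ j₁ j₂ : Matrix (Fin n ⊕ Fin n) (Fin n ⊕ Fin n) F,
        inParahoric O F ϖ j₁ ∧ inParahoric O F ϖ j₂ ∧
        g = j₁ * tMat n F (algebraMap O F ϖ) * j₂}
      = ⋃ m ∈ Rep, cosetOf n O F ϖ m) ∧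
    ∀ m ∈ Rep, ∀ m' ∈ Rep, m ≠ m' →
      Disjoint (cosetOf n O F ϖ m) (cosetOf n O F ϖ m') := by
  refine ⟨Set.ext fun g => ⟨?_, ?_⟩, ?_⟩
  · rintro ⟨j₁, j₂, hj₁, hj₂, rfl⟩
    obtain ⟨J₁, hJ₁, rfl⟩ := inParahoric_iff.1 hj₁
    obtain ⟨J₂, hJ₂, rfl⟩ := inParahoric_iff.1 hj₂
    obtain ⟨m₀, hm₀⟩ := exists_isParahoric_mul_tMat_eq hϖ.ne_zero hJ₁
    obtain ⟨m, ⟨hmRep, hm⟩, -⟩ := hRep m₀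
    obtain ⟨H, hH, hJt⟩ := hm₀ m hm
    refine Set.mem_biUnion hmRep (mem_cosetOf_iff.2 ⟨H * J₂, hH.mul hJ₂, ?_⟩)
    rw [← map_tMat, ← Matrix.map_mul, ← Matrix.map_mul, hJt, ← mul_assoc]
  · simp only [Set.mem_iUnion, mem_cosetOf_iff]
    rintro ⟨m, -, K, hK, rfl⟩
    refine ⟨_, _, inParahoric_iff.2 ⟨_, isParahoric_upperUnipotent m, rfl⟩,
      inParahoric_iff.2 ⟨K, hK, rfl⟩, ?_⟩
    rw [← map_tMat, ← Matrix.map_mul, ← Matrix.map_mul]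
  · intro m hm m' hm' hne
    refine Set.disjoint_left.2 fun g hg hg' => hne ?_
    obtain ⟨K, hK, rfl⟩ := mem_cosetOf_iff.1 hg
    obtain ⟨K', -, hK'⟩ := mem_cosetOf_iff.1 hg'
    have hdvd := dvd_sub_of_upperUnipotent_mul_tMat_mul_eq hK.1
      (map_injective (IsFractionRing.injective O F) hK'.symm)
    exact (hRep m).unique ⟨hm, fun i j => ⟨0, by ring⟩⟩ ⟨hm', hdvd⟩

/-- Decomposition of the double coset `J·t·J` into the disjoint right cosets
`[[1,m],[0,1]]·t·J`, `m` running over representatives of `M_n(O)/ϖM_n(O)`. -/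
theorem statement7 (n : ℕ) (hn : 1 ≤ n)
    (O : Type*) [CommRing O] [IsDomain O] [IsDiscreteValuationRing O]
    (F : Type*) [Field F] [Algebra O F] [IsFractionRing O F]
    (ϖ : O) (hϖ : Irreducible ϖ)
    (Rep : Set (Matrix (Fin n) (Fin n) O))
    (hRep : ∀ X : Matrix (Fin n) (Fin n) O,
      ∃! r, r ∈ Rep ∧ ∀ i j : Fin n, ∃ c : O, X i j - r i j = ϖ * c) :
    ({g | ∃ j₁ j₂ : Matrix (Fin n ⊕ Fin n) (Fin n ⊕ Fin n) F,
        inParahoric O F ϖ j₁ ∧ inParahoric O F ϖ j₂ ∧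
        g = j₁ * tMat n F (algebraMap O F ϖ) * j₂}
      = ⋃ m ∈ Rep, cosetOf n O F ϖ m) ∧
    ∀ m ∈ Rep, ∀ m' ∈ Rep, m ≠ m' →
      Disjoint (cosetOf n O F ϖ m) (cosetOf n O F ϖ m') :=
  statement7_general n O F ϖ hϖ Rep hRep
end

section
/- Let n ≥ 1, let S be a nonempty finite set, let w ∈ ℤ, and for each σ ∈ S let μ_{σ,n}, μ_{σ,n+1} ∈ ℤ satisfy μ_{σ,n} ≥ μ_{σ,n+1} (dominance) and μ_{σ,n} + μ_{σ,n+1} = w (purity). Let a₁, …, a_{2n} ∈ ℝ, set τ := {n+1, …, 2n} and C := |S|·(2n−1+w). Assume: (i) for every i ∈ τ, a_i ≤ Σ_{σ∈S} (n − 1 + μ_{σ,n+1}); (ii) there is a permutation ρ of {1, …, 2n} with ρ∘ρ = id and a_i + a_{ρ(i)} = C for all i ∈ {1, …, 2n}. Then for every i ∈ τ and every j ∉ τ one has a_i < C/2 < a_j; in particular ρ maps τ bijectively onto {1, …, n}. (This is the arithmetic core of the lemma asserting that a Q-ordinary spherical local component admitting a Shalika model is Q-ordinary only relative to τ and is Q-regular: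 here a_i plays the role of the p-adic valuation v_p(α_{p,i}) of the i-th Hecke parameter, (i) encodes Q-ordinarity together with integrality of Hecke eigenvalues, and (ii) encodes the self-pairing of Hecke parameters coming from the Shalika model.) -/
/-- Arithmetic core of the lemma "Q-ordinary + Shalika ⇒ Q-regular": given the dominance and
purity conditions on the weight, the ordinarity bound (i) and the self-pairing (ii) of the
(valuations of the) Hecke parameters, every `a_i` with `i ∈ τ = {n+1,…,2n}` (0-indexed:
`n ≤ i`) lies strictly below `C/2` and every `a_j` with `j ∉ τ` lies strictly above `C/2`;
in particular the involution `ρ` maps `τ` bijectively onto the complement `{1,…,n}`. -/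
theorem statement12 (n : ℕ) (hn : 1 ≤ n) (S : Type*) [Fintype S] [Nonempty S]
    (w : ℤ) (μn μn1 : S → ℤ)
    (hdom : ∀ σ : S, μn1 σ ≤ μn σ)
    (hpure : ∀ σ : S, μn σ + μn1 σ = w)
    (a : Fin (2 * n) → ℝ)
    (hord : ∀ i : Fin (2 * n), n ≤ (i : ℕ) →
      a i ≤ ∑ σ : S, ((n : ℝ) - 1 + (μn1 σ : ℝ)))
    (ρ : Equiv.Perm (Fin (2 * n)))
    (hinv : ∀ i, ρ (ρ i) = i)
    (hpair : ∀ i, a i + a (ρ i) =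
      (Fintype.card S : ℝ) * (2 * (n : ℝ) - 1 + (w : ℝ))) :
    (∀ i j : Fin (2 * n), n ≤ (i : ℕ) → (j : ℕ) < n →
      a i < (Fintype.card S : ℝ) * (2 * (n : ℝ) - 1 + (w : ℝ)) / 2 ∧
      (Fintype.card S : ℝ) * (2 * (n : ℝ) - 1 + (w : ℝ)) / 2 < a j) ∧
    (∀ i : Fin (2 * n), n ≤ (i : ℕ) → ((ρ i : ℕ) < n)) ∧
    (∀ j : Fin (2 * n), (j : ℕ) < n → n ≤ (ρ j : ℕ)) := by
  have hcard : (1:ℝ) ≤ (Fintype.card S : ℝ) := by exact_mod_cast Fintype.card_pos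
  have key : (∑ σ : S, ((n : ℝ) - 1 + (μn1 σ : ℝ))) <
      (Fintype.card S : ℝ) * (2 * (n : ℝ) - 1 + (w : ℝ)) / 2 := by
    have h1 : ∀ σ : S, ((n:ℝ) - 1 + (μn1 σ : ℝ)) ≤ (n:ℝ) - 1 + (w:ℝ)/2 := by
      intro σ
      have h2 : (2:ℤ) * μn1 σ ≤ w := by have := hdom σ; have := hpure σ; linarith
      have h3 : (2:ℝ) * (μn1 σ : ℝ) ≤ (w:ℝ) := by exact_mod_cast h2
      linarith
    calc ∑ σ : S, ((n:ℝ) - 1 + (μn1 σ : ℝ)) ≤ ∑ _σ : S, ((n:ℝ) - 1 + (w:ℝ)/2) :=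
          Finset.sum_le_sum (fun σ _ => h1 σ)
      _ = (Fintype.card S : ℝ) * ((n:ℝ) - 1 + (w:ℝ)/2) := by
          rw [Finset.sum_const, nsmul_eq_mul, Finset.card_univ]
      _ < (Fintype.card S : ℝ) * (2 * (n : ℝ) - 1 + (w : ℝ)) / 2 := by
          nlinarith [hcard]
  have low : ∀ i : Fin (2*n), n ≤ (i:ℕ) →
      a i < (Fintype.card S : ℝ) * (2 * (n : ℝ) - 1 + (w : ℝ)) / 2 :=
    fun i hi => lt_of_le_of_lt (hord i hi) key
  have high : ∀ i : Fin (2*n), n ≤ (i:ℕ) →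
      (Fintype.card S : ℝ) * (2 * (n : ℝ) - 1 + (w : ℝ)) / 2 < a (ρ i) := by
    intro i hi
    have h1 := hpair i
    have h2 := low i hi
    linarith
  have step3 : ∀ i : Fin (2*n), n ≤ (i:ℕ) → ((ρ i : ℕ) < n) := by
    intro i hi
    by_contra h
    push_neg at h
    have := low (ρ i) h
    have := high i hi
    linarith
  have hlt : ∀ k : Fin n, n + (k:ℕ) < 2*n := fun k => by omega
  set e : Fin n → Fin (2*n) := fun k => ⟨n + k, hlt k⟩ with he_def
  have he : ∀ k, n ≤ ((e k : Fin (2*n)):ℕ) := fun k => Nat.le_add_right _ _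
  set f : Fin n → Fin n := fun k => ⟨(ρ (e k) : ℕ), step3 _ (he k)⟩ with hf_def
  have finj : Function.Injective f := by
    intro k1 k2 h
    have hv : ((ρ (e k1)):ℕ) = ((ρ (e k2)):ℕ) := by
      have := congrArg Fin.val h
      simpa [hf_def] using this
    have h1 : ρ (e k1) = ρ (e k2) := Fin.ext hv
    have h2 : e k1 = e k2 := ρ.injective h1
    have h3 : n + (k1:ℕ) = n + (k2:ℕ) := congrArg Fin.val h2
    exact Fin.ext (by omega)
  have fsurj := Finite.injective_iff_surjective.mp finj
  have step4 : ∀ j : Fin (2*n), (j:ℕ) < n → n ≤ ((ρ j):ℕ) := by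
    intro j hj
    obtain ⟨k, hk⟩ := fsurj ⟨(j:ℕ), hj⟩
    have hjk : ρ (e k) = j := by
      apply Fin.ext
      have := congrArg Fin.val hk
      simpa [hf_def] using this
    have hrj : ρ j = e k := by rw [← hjk, hinv]
    rw [hrj]; exact he k
  refine ⟨?_, step3, step4⟩
  intro i j hi hj
  refine ⟨low i hi, ?_⟩
  have h1 : n ≤ ((ρ j):ℕ) := step4 j hj
  have h2 := high (ρ j) h1
  rwa [hinv] at h2
end

section
/- Let E be a finite extension of ℚ_p with ring of integers O, and let f = Σ_{k≥0} a_k T^k ∈ O[[T]] be a nonzero formal power series. Then there exists N ∈ ℕ such that for every finite extension E' of E, with ring of integers O' and maximal ideal m', the set { x ∈ m' : Σ_{k≥0} a_k x^k = 0 } has at most N elements. (Here for x ∈ m' the series Σ a_k x^k converges in O' since ‖a_k x^k‖ → 0 and O' is complete; the finiteness is the consequence of the Weierstrass preparation theorem used to deduce non-vanishing of all but finitely many twisted L-values from non-vanishing of the p-adic measure.) -/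
open scoped NNReal

/-- The ring of integers (closed unit ball) of an ultrametric normed field. -/
def integerSubring (E : Type*) [NormedField E] [IsUltrametricDist E] : Subring E where
  carrier := {x : E | ‖x‖ ≤ 1}
  one_mem' := by simp
  mul_mem' := by
    intro a b ha hb
    simp only [Set.mem_setOf_eq] at *
    calc ‖a * b‖ = ‖a‖ * ‖b‖ := norm_mul a b
    _ ≤ 1 := mul_le_one₀ ha (norm_nonneg b) hb
  zero_mem' := by simp
  add_mem' := by
    intro a b ha hb
    simp only [Set.mem_setOf_eq] at *
    exact le_trans (IsUltrametricDist.norm_add_le_max a b) (max_le ha hb)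
  neg_mem' := by
    intro a ha
    simpa using ha
/-! Strassmann's theorem: a series `∑ aₖ xᵏ` with bounded coefficients over a complete
ultrametric field has at most `N` zeros in the open unit disc, where `N` is the first index at
which `‖aₖ‖` attains its maximum. Dividing out a zero `x₀` produces a series with the same
maximal coefficient norm attained first at `N - 1`, so induction on `N` bounds the zeros; for
`N = 0` the constant term dominates every other term. Over a finite extension `E` of `ℚ_p` the
closed unit ball is compact, so the coefficient norms of a nonzero `f ∈ O[[T]]` do attain their
maximum, and an isometric embedding into `E'` does not change the index `N`. -/

open Set

lemma exists_forall_norm_le_of_isBounded {G : Type*} [NormedAddCommGroup G]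
    [IsUltrametricDist G] [ProperSpace G] {ι : Type*} {c : ι → G}
    (hc : Bornology.IsBounded (range c)) (hne : ∃ i, c i ≠ 0) : ∃ i, ∀ j, ‖c j‖ ≤ ‖c i‖ := by
  obtain ⟨i₀, hi₀⟩ := hne
  obtain ⟨y, hy, hmax⟩ := hc.isCompact_closure.exists_isMaxOn
    ⟨c i₀, subset_closure (mem_range_self i₀)⟩ continuous_norm.continuousOn
  have hy_pos : 0 < ‖y‖ :=
    (norm_pos_iff.mpr hi₀).trans_le (hmax (subset_closure (mem_range_self i₀)))
  obtain ⟨_, ⟨i, rfl⟩, hi⟩ := Metric.mem_closure_iff.mp hy ‖y‖ hy_pos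
  -- Ultrametric: a point closer to `y` than `‖y‖` has the same norm as `y`.
  have hiy : ‖c i‖ = ‖y‖ := by
    rw [dist_comm, dist_eq_norm] at hi
    simpa [max_eq_left hi.le] using
      IsUltrametricDist.norm_add_eq_max_of_norm_ne_norm (x := y) (y := c i - y) hi.ne'
  exact ⟨i, fun j => hiy ▸ hmax (subset_closure (mem_range_self j))⟩

/-- The analogue, for the open unit disc, of the Weierstrass degree. -/
def IsDominantIndex {α : Type*} [Norm α] (a : ℕ → α) (N : ℕ) : Prop :=
  0 < ‖a N‖ ∧ (∀ k, ‖a k‖ ≤ ‖a N‖) ∧ ∀ k < N, ‖a k‖ < ‖a N‖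

lemma IsDominantIndex.of_norm_eq {α β : Type*} [Norm α] [Norm β] {a : ℕ → α} {b : ℕ → β}
    {N : ℕ} (h : IsDominantIndex a N) (hb : ∀ k, ‖b k‖ = ‖a k‖) : IsDominantIndex b N := by
  simpa only [IsDominantIndex, hb] using h

lemma exists_isDominantIndex {G : Type*} [NormedAddCommGroup G] [IsUltrametricDist G]
    [ProperSpace G] {c : ℕ → G} (hc : Bornology.IsBounded (range c)) (hne : ∃ k, c k ≠ 0) :
    ∃ N, IsDominantIndex c N := by
  classical
  have hex := exists_forall_norm_le_of_isBounded hc hne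
  obtain ⟨k₀, hk₀⟩ := hne
  refine ⟨Nat.find hex, ?_, Nat.find_spec hex, fun k hk => ?_⟩
  · exact (norm_pos_iff.mpr hk₀).trans_le (Nat.find_spec hex k₀)
  · refine (Nat.find_spec hex k).lt_of_ne fun hEq => Nat.find_min hex hk fun j => ?_
    exact hEq ▸ Nat.find_spec hex j

section PowerSeries

variable {K : Type*} [NormedField K]

lemma tsum_mul_pow_eq_add_mul_tsum {a : ℕ → K} {x : K} (hs : Summable fun k => a k * x ^ k) :
    ∑' k, a k * x ^ k = a 0 + x * ∑' k, a (k + 1) * x ^ k := by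
  rw [hs.tsum_eq_zero_add, ← tsum_mul_left]
  congr 1
  · simp
  · exact tsum_congr fun k => by ring

/-- The coefficients of `(f(X) - f(x₀)) / (X - x₀)` for `f = ∑ aₖ Xᵏ`. -/
noncomputable def divCoeff (a : ℕ → K) (x₀ : K) (j : ℕ) : K :=
  ∑' m, a (j + 1 + m) * x₀ ^ m

lemma norm_tsum_mul_pow_le [IsUltrametricDist K] {a : ℕ → K} {M : ℝ} (hM : 0 ≤ M)
    (ha : ∀ k, ‖a k‖ ≤ M) {x : K} (hx : ‖x‖ ≤ 1) : ‖∑' k, a k * x ^ k‖ ≤ M :=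
  IsUltrametricDist.norm_tsum_le_of_forall_le_of_nonneg hM fun k => by
    rw [norm_mul, norm_pow]
    exact (mul_le_of_le_one_right (norm_nonneg _) (pow_le_one₀ (norm_nonneg x) hx)).trans (ha k)

lemma norm_divCoeff_le [IsUltrametricDist K] {a : ℕ → K} {M : ℝ} (hM : 0 ≤ M)
    (ha : ∀ k, ‖a k‖ ≤ M) {x₀ : K} (hx₀ : ‖x₀‖ ≤ 1) (j : ℕ) : ‖divCoeff a x₀ j‖ ≤ M :=
  norm_tsum_mul_pow_le hM (fun _ => ha _) hx₀

variable [CompleteSpace K]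

lemma summable_mul_pow_of_norm_le {a : ℕ → K} {M : ℝ} (ha : ∀ k, ‖a k‖ ≤ M) {x : K}
    (hx : ‖x‖ < 1) : Summable fun k => a k * x ^ k := by
  refine Summable.of_norm_bounded ((summable_geometric_of_lt_one (norm_nonneg x) hx).mul_left M)
    fun k => ?_
  rw [norm_mul, norm_pow]
  exact mul_le_mul_of_nonneg_right (ha k) (pow_nonneg (norm_nonneg x) k)

lemma divCoeff_eq_add {a : ℕ → K} {M : ℝ} (ha : ∀ k, ‖a k‖ ≤ M) {x₀ : K} (hx₀ : ‖x₀‖ < 1)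
    (j : ℕ) : divCoeff a x₀ j = a (j + 1) + x₀ * divCoeff a x₀ (j + 1) := by
  rw [divCoeff, tsum_mul_pow_eq_add_mul_tsum (summable_mul_pow_of_norm_le (fun _ => ha _) hx₀),
    divCoeff]
  ring_nf

lemma tsum_mul_pow_eq_add_mul_divCoeff {a : ℕ → K} {M : ℝ} (ha : ∀ k, ‖a k‖ ≤ M) {x₀ : K}
    (hx₀ : ‖x₀‖ < 1) : ∑' k, a k * x₀ ^ k = a 0 + x₀ * divCoeff a x₀ 0 := by
  rw [tsum_mul_pow_eq_add_mul_tsum (summable_mul_pow_of_norm_le ha hx₀), divCoeff]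
  simp only [zero_add, add_comm 1]

variable [IsUltrametricDist K]

lemma tsum_mul_pow_sub_tsum_mul_pow {a : ℕ → K} {M : ℝ} (ha : ∀ k, ‖a k‖ ≤ M) {x₀ x : K}
    (hx₀ : ‖x₀‖ < 1) (hx : ‖x‖ < 1) :
    ∑' k, a k * x ^ k - ∑' k, a k * x₀ ^ k = (x - x₀) * ∑' j, divCoeff a x₀ j * x ^ j := by
  have hM : 0 ≤ M := (norm_nonneg _).trans (ha 0)
  set b := divCoeff a x₀
  have hb := norm_divCoeff_le hM ha hx₀.le
  have hbs : Summable fun j => b (j + 1) * x ^ j := summable_mul_pow_of_norm_le (fun _ => hb _) hx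
  have hshift : ∑' k, a (k + 1) * x ^ k = ∑' j, b j * x ^ j - x₀ * ∑' j, b (j + 1) * x ^ j := by
    rw [← tsum_mul_left, ← (summable_mul_pow_of_norm_le hb hx).tsum_sub (hbs.mul_left x₀)]
    exact tsum_congr fun k => by rw [divCoeff_eq_add ha hx₀ k]; ring
  linear_combination tsum_mul_pow_eq_add_mul_tsum (summable_mul_pow_of_norm_le ha hx) -
    tsum_mul_pow_eq_add_mul_divCoeff ha hx₀ + x * hshift +
    x₀ * tsum_mul_pow_eq_add_mul_tsum (summable_mul_pow_of_norm_le hb hx)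

def unitBallZeros (a : ℕ → K) : Set K :=
  {x | ‖x‖ < 1 ∧ ∑' k, a k * x ^ k = 0}

lemma unitBallZeros_subset_insert {a : ℕ → K} {M : ℝ} (ha : ∀ k, ‖a k‖ ≤ M) {x₀ : K}
    (hx₀ : x₀ ∈ unitBallZeros a) :
    unitBallZeros a ⊆ insert x₀ (unitBallZeros (divCoeff a x₀)) := by
  rintro x ⟨hx, hfx⟩
  have hfactor := tsum_mul_pow_sub_tsum_mul_pow ha hx₀.1 hx
  rw [hfx, hx₀.2, sub_zero, eq_comm, mul_eq_zero, sub_eq_zero] at hfactor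
  exact hfactor.imp id fun h => ⟨hx, h⟩

lemma IsDominantIndex.unitBallZeros_eq_empty {a : ℕ → K} (h : IsDominantIndex a 0) :
    unitBallZeros a = ∅ := by
  refine eq_empty_of_forall_notMem fun x ⟨hx, hfx⟩ => ?_
  obtain ⟨hpos, hle, -⟩ := h
  have htail : ‖x * ∑' k, a (k + 1) * x ^ k‖ < ‖a 0‖ := by
    rw [norm_mul]
    calc ‖x‖ * ‖∑' k, a (k + 1) * x ^ k‖ ≤ ‖x‖ * ‖a 0‖ :=
          mul_le_mul_of_nonneg_left (norm_tsum_mul_pow_le hpos.le (fun k => hle _) hx.le)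
            (norm_nonneg x)
      _ < ‖a 0‖ := mul_lt_of_lt_one_left hpos hx
  have hnorm : ‖a 0 + x * ∑' k, a (k + 1) * x ^ k‖ = ‖a 0‖ := by
    rw [IsUltrametricDist.norm_add_eq_max_of_norm_ne_norm htail.ne', max_eq_left htail.le]
  rw [← tsum_mul_pow_eq_add_mul_tsum (summable_mul_pow_of_norm_le hle hx), hfx, norm_zero] at hnorm
  exact hpos.ne hnorm

lemma IsDominantIndex.divCoeff_of_succ {a : ℕ → K} {n : ℕ} (h : IsDominantIndex a (n + 1))
    {x₀ : K} (hx₀ : ‖x₀‖ < 1) : IsDominantIndex (divCoeff a x₀) n := by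
  obtain ⟨hpos, hle, hlt⟩ := h
  have hb := norm_divCoeff_le hpos.le hle hx₀.le
  have hsmall : ∀ j, ‖x₀ * divCoeff a x₀ (j + 1)‖ < ‖a (n + 1)‖ := fun j => by
    rw [norm_mul]
    exact (mul_le_mul_of_nonneg_left (hb _) (norm_nonneg _)).trans_lt
      (mul_lt_of_lt_one_left hpos hx₀)
  have hn : ‖divCoeff a x₀ n‖ = ‖a (n + 1)‖ := by
    rw [divCoeff_eq_add hle hx₀, IsUltrametricDist.norm_add_eq_max_of_norm_ne_norm
      (hsmall n).ne', max_eq_left (hsmall n).le]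
  refine ⟨hn ▸ hpos, hn ▸ hb, fun j hj => hn ▸ ?_⟩
  rw [divCoeff_eq_add hle hx₀]
  exact (IsUltrametricDist.norm_add_le_max _ _).trans_lt (max_lt (hlt _ (by omega)) (hsmall j))

theorem IsDominantIndex.unitBallZeros_finite_and_ncard_le {a : ℕ → K} {N : ℕ}
    (h : IsDominantIndex a N) : (unitBallZeros a).Finite ∧ (unitBallZeros a).ncard ≤ N := by
  induction N generalizing a with
  | zero => simp [h.unitBallZeros_eq_empty]
  | succ n ih =>
    obtain he | ⟨x₀, hx₀⟩ := (unitBallZeros a).eq_empty_or_nonempty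
    · simp [he]
    obtain ⟨hfin, hcard⟩ := ih (h.divCoeff_of_succ hx₀.1)
    have hsub := unitBallZeros_subset_insert h.2.1 hx₀
    refine ⟨(hfin.insert x₀).subset hsub, ?_⟩
    calc (unitBallZeros a).ncard ≤ (insert x₀ (unitBallZeros (divCoeff a x₀))).ncard :=
          ncard_le_ncard hsub (hfin.insert x₀)
      _ ≤ n + 1 := (ncard_insert_le _ _).trans (by omega)

end PowerSeries

theorem statement13_general (p : ℕ) [Fact p.Prime]
    (E : Type) [NormedField E] [IsUltrametricDist E]
    [NormedAlgebra ℚ_[p] E] [FiniteDimensional ℚ_[p] E]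
    (f : PowerSeries (integerSubring E)) (hf : f ≠ 0) :
    ∃ N : ℕ, ∀ (E' : Type) [NormedField E'] [IsUltrametricDist E'] [CompleteSpace E']
      [NormedAlgebra E E'] [FiniteDimensional E E'],
      (∀ x : E, ‖algebraMap E E' x‖ = ‖x‖) →
      ({x : E' | ‖x‖ < 1 ∧
          ∑' k : ℕ, algebraMap E E' (((PowerSeries.coeff (R := ↥(integerSubring E)) k f) : ↥(integerSubring E)) : E) * x ^ k = 0}.Finite ∧
        {x : E' | ‖x‖ < 1 ∧
          ∑' k : ℕ, algebraMap E E' (((PowerSeries.coeff (R := ↥(integerSubring E)) k f) : ↥(integerSubring E)) : E) * x ^ k = 0}.ncard ≤ N) := by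
  have : ProperSpace E := FiniteDimensional.proper ℚ_[p] E
  set c : ℕ → E := fun k => (PowerSeries.coeff k f : integerSubring E)
  have hbdd : Bornology.IsBounded (range c) :=
    (Metric.isBounded_closedBall (x := 0) (r := 1)).subset <| by
      rintro _ ⟨k, rfl⟩
      exact mem_closedBall_zero_iff.mpr (PowerSeries.coeff k f).2
  have hne : ∃ k, c k ≠ 0 := by
    obtain ⟨k, hk⟩ := PowerSeries.exists_coeff_ne_zero_iff_ne_zero.mpr hf
    exact ⟨k, by simpa [c] using hk⟩
  obtain ⟨N, hN⟩ := exists_isDominantIndex hbdd hne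
  exact ⟨N, fun E' _ _ _ _ _ hE' =>
    (hN.of_norm_eq fun k => hE' (c k)).unitBallZeros_finite_and_ncard_le⟩

/-- Weierstrass-type finiteness: a nonzero power series `f ∈ O[[T]]` over the ring of integers
`O` of a finite extension `E` of `ℚ_p` has a uniformly bounded number of zeros in the maximal
ideal of the ring of integers of any finite extension `E'` of `E`. -/
theorem statement13 (p : ℕ) [Fact p.Prime]
    (E : Type) [NormedField E] [IsUltrametricDist E] [CompleteSpace E]
    [NormedAlgebra ℚ_[p] E] [FiniteDimensional ℚ_[p] E]
    (hE : ∀ r : ℚ_[p], ‖algebraMap ℚ_[p] E r‖ = ‖r‖)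
    (f : PowerSeries (integerSubring E)) (hf : f ≠ 0) :
    ∃ N : ℕ, ∀ (E' : Type) [NormedField E'] [IsUltrametricDist E'] [CompleteSpace E']
      [NormedAlgebra E E'] [FiniteDimensional E E'],
      (∀ x : E, ‖algebraMap E E' x‖ = ‖x‖) →
      ({x : E' | ‖x‖ < 1 ∧
          ∑' k : ℕ, algebraMap E E' (((PowerSeries.coeff (R := ↥(integerSubring E)) k f) : ↥(integerSubring E)) : E) * x ^ k = 0}.Finite ∧
        {x : E' | ‖x‖ < 1 ∧
          ∑' k : ℕ, algebraMap E E' (((PowerSeries.coeff (R := ↥(integerSubring E)) k f) : ↥(integerSubring E)) : E) * x ^ k = 0}.ncard ≤ N) :=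
  statement13_general p E f hf
end

section
/- Let O be a discrete valuation ring with uniformizer ϖ, and let n ≥ 1 and β ≥ 1 be integers. Let g ∈ GL_n(O) be a matrix all of whose off-diagonal entries lie in ϖ^βO. Then there exist unique matrices ℓ, d, u ∈ M_n(O) with g = ℓ·d·u, where ℓ is lower triangular unipotent with all strictly-lower entries in ϖ^βO, d is diagonal with all diagonal entries in O^×, and u is upper triangular unipotent with all strictly-upper entries in ϖ^βO. Conversely, every such product ℓ·d·u lies in GL_n(O) and has all off-diagonal entries in ϖ^βO. (Iwahori factorization: ker(GL_n(O) → GL_n(O/ϖ^β))·T_n(O) is identified with the product N⁻_n(ϖ^βO) × T_n(O) × N_n(ϖ^βO).) -/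
/-!
Everything happens modulo an ideal `J` inside the Jacobson radical (here `J = (ϖ^β)`). Modulo `J`
such a `g` is diagonal, so the product of its diagonal entries is a unit, hence so is each entry.
Clearing the first row and column with the unit corner entry leaves a Schur complement of the same
kind, which gives the factorization by induction on `n`. For uniqueness, `l'⁻¹ l d = d' u' u⁻¹` is
both lower and upper triangular, hence diagonal; as `l` and `l'` have ones on the diagonal,
comparing `l d = l' (l'⁻¹ l d)` entrywise forces `l = l'`, and transposing gives `u = u'`,
`d = d'`. Conversely `l` and `u` reduce to `1` modulo `J`, so `l d u` reduces to the diagonal `d`.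
-/

theorem IsUnit.sub_of_mem_jacobson_bot {R : Type*} [CommRing R] {x y : R} (hx : IsUnit x)
    (hy : y ∈ Ideal.jacobson (⊥ : Ideal R)) : IsUnit (x - y) := by
  let π := Ideal.Quotient.mk (Ideal.jacobson (⊥ : Ideal R))
  have : IsLocalHom π := isLocalHom_of_le_jacobson_bot _ le_rfl
  exact IsUnit.of_map π _ (by simpa [π, Ideal.Quotient.eq_zero_iff_mem.2 hy] using hx.map π)

namespace Matrix

section Diagonal

variable {m R : Type*} [CommRing R]

def IsUnitDiagonal (d : Matrix m m R) : Prop := d.IsDiag ∧ ∀ i, IsUnit (d i i)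

theorem IsDiag.blockTriangular {α : Type*} [Preorder α] {d : Matrix m m R} (h : d.IsDiag)
    (b : m → α) : d.BlockTriangular b :=
  fun _ _ hij => h fun hji => (hji ▸ hij).false

variable [Fintype m] [DecidableEq m]

theorem IsUnitDiagonal.isUnit_det {d : Matrix m m R} (h : IsUnitDiagonal d) : IsUnit d.det := by
  rw [← h.1.diagonal_diag, det_diagonal]
  exact IsUnit.prod_iff.2 fun i _ => h.2 i

theorem isUnit_apply_self_of_isUnit_det {J : Ideal R} (hJ : J ≤ Ideal.jacobson ⊥)
    {g : Matrix m m R} (hg : IsUnit g.det) (hoff : ∀ i j, i ≠ j → g i j ∈ J) (i : m) :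
    IsUnit (g i i) := by
  have := isLocalHom_of_le_jacobson_bot J hJ
  have hdiag : (g.map (Ideal.Quotient.mk J)).IsDiag := fun i j hij =>
    Ideal.Quotient.eq_zero_iff_mem.2 (hoff i j hij)
  have hprod := hg.map (Ideal.Quotient.mk J)
  rw [RingHom.map_det, RingHom.mapMatrix_apply, ← hdiag.diagonal_diag, det_diagonal] at hprod
  exact IsUnit.of_map (Ideal.Quotient.mk J) _ (IsUnit.prod_iff.1 hprod i (Finset.mem_univ i))

theorem eq_of_mul_eq_mul_of_isDiag {l l' d d' : Matrix m m R}
    (hl : ∀ i, l i i = 1) (hl' : ∀ i, l' i i = 1) (hd : d.IsDiag) (hd' : d'.IsDiag)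
    (hdu : ∀ i, IsUnit (d i i)) (h : l * d = l' * d') : l = l' ∧ d = d' := by
  rw [← hd.diagonal_diag, ← hd'.diagonal_diag] at h ⊢
  have hentry (i j : m) : l i j * d j j = l' i j * d' j j := by
    simpa using congrFun (congrFun h i) j
  have hdiag (j : m) : d j j = d' j j := by simpa [hl, hl'] using hentry j j
  refine ⟨ext fun i j => (hdu j).mul_left_inj.1 ?_, congrArg diagonal (funext hdiag)⟩
  rw [hentry, hdiag]

end Diagonal

section Unipotent

variable {m R : Type*} [CommRing R] [LinearOrder m]

theorem isDiag_of_isLowerTriangular_of_isUpperTriangular {M : Matrix m m R}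
    (hl : M.IsLowerTriangular) (hu : M.IsUpperTriangular) : M.IsDiag :=
  fun _ _ hij => hij.lt_or_gt.elim (fun h => hl h) (fun h => hu h)

def IsLowerUnipotent (l : Matrix m m R) : Prop := l.IsLowerTriangular ∧ ∀ i, l i i = 1

def IsUpperUnipotent (u : Matrix m m R) : Prop := u.IsUpperTriangular ∧ ∀ i, u i i = 1

def IsLowerUnipotentIn (J : Ideal R) (l : Matrix m m R) : Prop :=
  (∀ i, l i i = 1) ∧ (∀ i j, i < j → l i j = 0) ∧ (∀ i j, j < i → l i j ∈ J)

def IsUpperUnipotentIn (J : Ideal R) (u : Matrix m m R) : Prop :=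
  (∀ i, u i i = 1) ∧ (∀ i j, j < i → u i j = 0) ∧ (∀ i j, i < j → u i j ∈ J)

variable {J : Ideal R} {l d u l' d' u' : Matrix m m R}

theorem IsLowerUnipotentIn.isLowerUnipotent (h : IsLowerUnipotentIn J l) : IsLowerUnipotent l :=
  ⟨fun i j hij => h.2.1 i j hij, h.1⟩

theorem IsUpperUnipotentIn.isUpperUnipotent (h : IsUpperUnipotentIn J u) : IsUpperUnipotent u :=
  ⟨fun i j hij => h.2.1 i j hij, h.1⟩

theorem IsUpperUnipotent.transpose (h : IsUpperUnipotent u) : IsLowerUnipotent uᵀ :=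
  ⟨h.1.transpose, h.2⟩

variable [DecidableEq m]

theorem IsLowerUnipotentIn.map_mk_eq_one (h : IsLowerUnipotentIn J l) :
    l.map (Ideal.Quotient.mk J) = 1 := by
  ext i j
  rcases lt_trichotomy i j with hij | rfl | hij
  · simp [h.2.1 i j hij, hij.ne]
  · simp [h.1 i]
  · simp [Ideal.Quotient.eq_zero_iff_mem.2 (h.2.2 i j hij), hij.ne']

theorem IsUpperUnipotentIn.map_mk_eq_one (h : IsUpperUnipotentIn J u) :
    u.map (Ideal.Quotient.mk J) = 1 := by
  ext i j
  rcases lt_trichotomy i j with hij | rfl | hij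
  · simp [Ideal.Quotient.eq_zero_iff_mem.2 (h.2.2 i j hij), hij.ne]
  · simp [h.1 i]
  · simp [h.2.1 i j hij, hij.ne']

variable [Fintype m]

theorem IsLowerUnipotent.det_eq_one (h : IsLowerUnipotent l) : l.det = 1 := by
  simp [det_of_isLowerTriangular l h.1, h.2]

theorem IsUpperUnipotent.det_eq_one (h : IsUpperUnipotent u) : u.det = 1 := by
  simp [det_of_isUpperTriangular h.1, h.2]

theorem isUnit_ldu (hl : IsLowerUnipotent l) (hd : IsUnitDiagonal d) (hu : IsUpperUnipotent u) :
    IsUnit (l * d * u) := by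
  rw [isUnit_iff_isUnit_det, det_mul, det_mul, hl.det_eq_one, hu.det_eq_one, one_mul, mul_one]
  exact hd.isUnit_det

theorem ldu_apply_mem (hl : IsLowerUnipotentIn J l) (hd : d.IsDiag) (hu : IsUpperUnipotentIn J u)
    {i j : m} (hij : i ≠ j) : (l * d * u) i j ∈ J := by
  rw [← Ideal.Quotient.eq_zero_iff_mem, ← map_apply (f := Ideal.Quotient.mk J), Matrix.map_mul,
    Matrix.map_mul, hl.map_mk_eq_one, hu.map_mk_eq_one, one_mul, mul_one, map_apply, hd hij,
    map_zero]

theorem eq_of_ldu_eq (hl : IsLowerUnipotent l) (hd : IsUnitDiagonal d) (hu : IsUpperUnipotent u)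
    (hl' : IsLowerUnipotent l') (hd' : d'.IsDiag) (hu' : IsUpperUnipotent u')
    (h : l * d * u = l' * d' * u') : l = l' ∧ d = d' ∧ u = u' := by
  have := l'.invertibleOfIsUnitDet (by simp [hl'.det_eq_one])
  have := u.invertibleOfIsUnitDet (by simp [hu.det_eq_one])
  have hld : l * d = l' * (d' * u' * u⁻¹) := by
    rw [← mul_inv_cancel_right_of_invertible u (l * d), h]
    simp only [Matrix.mul_assoc]
  have hdiag : (d' * u' * u⁻¹).IsDiag := by
    refine isDiag_of_isLowerTriangular_of_isUpperTriangular ?_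
      (((hd'.blockTriangular _).mul hu'.1).mul (blockTriangular_inv_of_blockTriangular hu.1))
    rw [← (inv_mul_eq_iff_eq_mul_of_invertible _ _ _).2 hld]
    exact (blockTriangular_inv_of_blockTriangular hl'.1).mul (hl.1.mul (hd.1.blockTriangular _))
  obtain rfl := (eq_of_mul_eq_mul_of_isDiag hl.2 hl'.2 hd.1 hdiag hd.2 hld).1
  have hdu : d * u = d' * u' :=
    ((isUnit_iff_isUnit_det l).2 (by simp [hl.det_eq_one])).mul_left_cancel
      (by simpa only [Matrix.mul_assoc] using h)
  replace hdu : uᵀ * dᵀ = u'ᵀ * d'ᵀ := by rw [← transpose_mul, ← transpose_mul, hdu]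
  obtain ⟨hu, hd⟩ := eq_of_mul_eq_mul_of_isDiag hu.transpose.2 hu'.transpose.2 hd.1.transpose
    hd'.transpose hd.2 hdu
  exact ⟨rfl, transpose_injective hd, transpose_injective hu⟩

end Unipotent

def bordered {R : Type*} {n : ℕ} (a : R) (c b : Fin n → R) (A : Matrix (Fin n) (Fin n) R) :
    Matrix (Fin (n + 1)) (Fin (n + 1)) R :=
  of fun i j => Fin.cases (Fin.cases a b j) (fun i => Fin.cases (c i) (A i) j) i

section Bordered

variable {R : Type*} {n : ℕ} (a : R) (c b : Fin n → R) (A : Matrix (Fin n) (Fin n) R)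

@[simp] theorem bordered_zero_zero : bordered a c b A 0 0 = a := rfl

@[simp] theorem bordered_zero_succ (j : Fin n) : bordered a c b A 0 j.succ = b j := rfl

@[simp] theorem bordered_succ_zero (i : Fin n) : bordered a c b A i.succ 0 = c i := rfl

@[simp] theorem bordered_succ_succ (i j : Fin n) : bordered a c b A i.succ j.succ = A i j := rfl

theorem bordered_eta (g : Matrix (Fin (n + 1)) (Fin (n + 1)) R) :
    bordered (g 0 0) (fun i => g i.succ 0) (fun j => g 0 j.succ) (g.submatrix Fin.succ Fin.succ) =
      g := by
  ext i j
  cases i using Fin.cases <;> cases j using Fin.cases <;> rfl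

theorem bordered_mul_bordered [CommSemiring R] (a' : R) (c' b' : Fin n → R)
    (A' : Matrix (Fin n) (Fin n) R) :
    bordered a c b A * bordered a' c' b' A' =
      bordered (a * a' + b ⬝ᵥ c') (A *ᵥ c' + a' • c) (b ᵥ* A' + a • b')
        (vecMulVec c b' + A * A') := by
  ext i j
  cases i using Fin.cases <;> cases j using Fin.cases <;>
    simp [mul_apply, Fin.sum_univ_succ, dotProduct, mulVec, vecMul, vecMulVec_apply, mul_comm] <;>
    ring

variable [CommRing R] {J : Ideal R} {a c b A}

theorem IsLowerUnipotentIn.bordered (hc : ∀ i, c i ∈ J) (hA : IsLowerUnipotentIn J A) :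
    IsLowerUnipotentIn J (bordered 1 c 0 A) := by
  refine ⟨fun i => ?_, fun i j hij => ?_, fun i j hij => ?_⟩ <;>
    [cases i using Fin.cases; (cases i using Fin.cases <;> cases j using Fin.cases);
      (cases i using Fin.cases <;> cases j using Fin.cases)] <;>
    simp_all [IsLowerUnipotentIn, Fin.succ_lt_succ_iff]

theorem IsUpperUnipotentIn.bordered (hb : ∀ j, b j ∈ J) (hA : IsUpperUnipotentIn J A) :
    IsUpperUnipotentIn J (bordered 1 0 b A) := by
  refine ⟨fun i => ?_, fun i j hij => ?_, fun i j hij => ?_⟩ <;>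
    [cases i using Fin.cases; (cases i using Fin.cases <;> cases j using Fin.cases);
      (cases i using Fin.cases <;> cases j using Fin.cases)] <;>
    simp_all [IsUpperUnipotentIn, Fin.succ_lt_succ_iff]

theorem IsUnitDiagonal.bordered (ha : IsUnit a) (hA : IsUnitDiagonal A) :
    IsUnitDiagonal (bordered a 0 0 A) := by
  refine ⟨fun i j hij => ?_, fun i => ?_⟩ <;>
    [(cases i using Fin.cases <;> cases j using Fin.cases); cases i using Fin.cases] <;>
    simp_all [IsUnitDiagonal]
  exact hA.1 (by simpa using hij)

end Bordered

theorem exists_ldu_of_isUnit_apply_self {R : Type*} [CommRing R] {J : Ideal R}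
    (hJ : J ≤ Ideal.jacobson ⊥) :
    ∀ {n : ℕ} (g : Matrix (Fin n) (Fin n) R), (∀ i, IsUnit (g i i)) →
      (∀ i j, i ≠ j → g i j ∈ J) →
      ∃ l d u, IsLowerUnipotentIn J l ∧ IsUnitDiagonal d ∧ IsUpperUnipotentIn J u ∧ g = l * d * u
  | 0, g, _, _ => ⟨1, 1, 1, by simp [IsLowerUnipotentIn], by simp [IsUnitDiagonal, IsDiag],
      by simp [IsUpperUnipotentIn], Subsingleton.elim _ _⟩
  | n + 1, g, hdiag, hoff => by
    set a := g 0 0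
    set c : Fin n → R := fun i => g i.succ 0
    set b : Fin n → R := fun j => g 0 j.succ
    set x := Ring.inverse a
    have hax : a * x = 1 := Ring.mul_inverse_cancel a (hdiag 0)
    have hcJ (i : Fin n) : c i ∈ J := hoff _ _ (Fin.succ_ne_zero i)
    have hbJ (j : Fin n) : b j ∈ J := hoff _ _ (Fin.succ_ne_zero j).symm
    -- the Schur complement of the corner entry `a`
    set S := g.submatrix Fin.succ Fin.succ - x • vecMulVec c b with hS
    have hcxb (i j : Fin n) : (x • vecMulVec c b) i j ∈ J := by
      simpa [vecMulVec_apply, mul_assoc] using J.mul_mem_left x (J.mul_mem_right (b j) (hcJ i))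
    have hSdiag (i : Fin n) : IsUnit (S i i) :=
      (hdiag i.succ).sub_of_mem_jacobson_bot (hJ (hcxb i i))
    have hSoff (i j : Fin n) (hij : i ≠ j) : S i j ∈ J :=
      J.sub_mem (hoff _ _ ((Fin.succ_injective _).ne hij)) (hcxb i j)
    obtain ⟨l, d, u, hl, hd, hu, hldu⟩ := exists_ldu_of_isUnit_apply_self hJ S hSdiag hSoff
    refine ⟨bordered 1 (x • c) 0 l, bordered a 0 0 d, bordered 1 0 (x • b) u,
      hl.bordered fun i => J.mul_mem_left x (hcJ i), hd.bordered (hdiag 0),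
      hu.bordered fun j => J.mul_mem_left x (hbJ j), ?_⟩
    rw [bordered_mul_bordered, bordered_mul_bordered]
    simpa [smul_smul, hax, Matrix.add_mul, ← hldu, hS] using (bordered_eta g).symm

end Matrix

open Matrix

theorem statement14_general (O : Type*) [CommRing O] [IsDomain O] [IsDiscreteValuationRing O]
    (ϖ : O) (hϖ : Irreducible ϖ) (n β : ℕ) (hβ : 1 ≤ β) :
    (∀ g : Matrix (Fin n) (Fin n) O, IsUnit g →
      (∀ i j : Fin n, i ≠ j → g i j ∈ Ideal.span {ϖ ^ β}) →
      ∃! ldu : Matrix (Fin n) (Fin n) O × Matrix (Fin n) (Fin n) O ×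
          Matrix (Fin n) (Fin n) O,
        ((∀ i : Fin n, ldu.1 i i = 1) ∧ (∀ i j : Fin n, i < j → ldu.1 i j = 0) ∧
          (∀ i j : Fin n, j < i → ldu.1 i j ∈ Ideal.span {ϖ ^ β})) ∧
        ((∀ i j : Fin n, i ≠ j → ldu.2.1 i j = 0) ∧ (∀ i : Fin n, IsUnit (ldu.2.1 i i))) ∧
        ((∀ i : Fin n, ldu.2.2 i i = 1) ∧ (∀ i j : Fin n, j < i → ldu.2.2 i j = 0) ∧
          (∀ i j : Fin n, i < j → ldu.2.2 i j ∈ Ideal.span {ϖ ^ β})) ∧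
        g = ldu.1 * ldu.2.1 * ldu.2.2) ∧
    (∀ l d u : Matrix (Fin n) (Fin n) O,
      ((∀ i : Fin n, l i i = 1) ∧ (∀ i j : Fin n, i < j → l i j = 0) ∧
        (∀ i j : Fin n, j < i → l i j ∈ Ideal.span {ϖ ^ β})) →
      ((∀ i j : Fin n, i ≠ j → d i j = 0) ∧ (∀ i : Fin n, IsUnit (d i i))) →
      ((∀ i : Fin n, u i i = 1) ∧ (∀ i j : Fin n, j < i → u i j = 0) ∧
        (∀ i j : Fin n, i < j → u i j ∈ Ideal.span {ϖ ^ β})) →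
      (IsUnit (l * d * u) ∧
        ∀ i j : Fin n, i ≠ j → (l * d * u) i j ∈ Ideal.span {ϖ ^ β})) := by
  have hJ : Ideal.span {ϖ ^ β} ≤ Ideal.jacobson ⊥ := by
    refine le_trans ?_ (IsLocalRing.maximalIdeal_le_jacobson ⊥)
    rw [Ideal.span_singleton_le_iff_mem, IsLocalRing.mem_maximalIdeal, mem_nonunits_iff,
      isUnit_pow_iff (by omega)]
    exact hϖ.not_isUnit
  refine ⟨fun g hg hoff => ?_, fun l d u hl hd hu => ⟨isUnit_ldu
    (IsLowerUnipotentIn.isLowerUnipotent hl) hd (IsUpperUnipotentIn.isUpperUnipotent hu),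
    fun i j hij => ldu_apply_mem hl hd.1 hu hij⟩⟩
  obtain ⟨l, d, u, hl, hd, hu, rfl⟩ := exists_ldu_of_isUnit_apply_self hJ g
    (isUnit_apply_self_of_isUnit_det hJ ((isUnit_iff_isUnit_det g).1 hg) hoff) hoff
  refine ⟨(l, d, u), ⟨hl, hd, hu, rfl⟩, ?_⟩
  rintro ⟨l', d', u'⟩ ⟨hl', hd', hu', h⟩
  obtain ⟨rfl, rfl, rfl⟩ := eq_of_ldu_eq (IsLowerUnipotentIn.isLowerUnipotent hl') hd'
    (IsUpperUnipotentIn.isUpperUnipotent hu') hl.isLowerUnipotent hd.1 hu.isUpperUnipotent h.symm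
  rfl

/-- Iwahori factorization over a discrete valuation ring: a matrix `g ∈ GL_n(O)` whose
off-diagonal entries lie in `ϖ^β O` factors uniquely as `g = ℓ·d·u` with `ℓ` lower unipotent
with strictly-lower entries in `ϖ^β O`, `d` diagonal with unit entries, and `u` upper
unipotent with strictly-upper entries in `ϖ^β O`; conversely any such product lies in
`GL_n(O)` with off-diagonal entries in `ϖ^β O`. -/
theorem statement14 (O : Type*) [CommRing O] [IsDomain O] [IsDiscreteValuationRing O]
    (ϖ : O) (hϖ : Irreducible ϖ) (n β : ℕ) (hn : 1 ≤ n) (hβ : 1 ≤ β) :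
    (∀ g : Matrix (Fin n) (Fin n) O, IsUnit g →
      (∀ i j : Fin n, i ≠ j → g i j ∈ Ideal.span {ϖ ^ β}) →
      ∃! ldu : Matrix (Fin n) (Fin n) O × Matrix (Fin n) (Fin n) O ×
          Matrix (Fin n) (Fin n) O,
        ((∀ i : Fin n, ldu.1 i i = 1) ∧ (∀ i j : Fin n, i < j → ldu.1 i j = 0) ∧
          (∀ i j : Fin n, j < i → ldu.1 i j ∈ Ideal.span {ϖ ^ β})) ∧
        ((∀ i j : Fin n, i ≠ j → ldu.2.1 i j = 0) ∧ (∀ i : Fin n, IsUnit (ldu.2.1 i i))) ∧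
        ((∀ i : Fin n, ldu.2.2 i i = 1) ∧ (∀ i j : Fin n, j < i → ldu.2.2 i j = 0) ∧
          (∀ i j : Fin n, i < j → ldu.2.2 i j ∈ Ideal.span {ϖ ^ β})) ∧
        g = ldu.1 * ldu.2.1 * ldu.2.2) ∧
    (∀ l d u : Matrix (Fin n) (Fin n) O,
      ((∀ i : Fin n, l i i = 1) ∧ (∀ i j : Fin n, i < j → l i j = 0) ∧
        (∀ i j : Fin n, j < i → l i j ∈ Ideal.span {ϖ ^ β})) →
      ((∀ i j : Fin n, i ≠ j → d i j = 0) ∧ (∀ i : Fin n, IsUnit (d i i))) →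
      ((∀ i : Fin n, u i i = 1) ∧ (∀ i j : Fin n, j < i → u i j = 0) ∧
        (∀ i j : Fin n, i < j → u i j ∈ Ideal.span {ϖ ^ β})) →
      (IsUnit (l * d * u) ∧
        ∀ i j : Fin n, i ≠ j → (l * d * u) i j ∈ Ideal.span {ϖ ^ β})) :=
  statement14_general O ϖ hϖ n β hβ
end
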